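/- arXiv:1511.03898 — 3 statements merged into one kernel-verified Lean document; each statement's English description precedes it below -/
import Mathlib

section
/- Fix an integer k ≥ 1 and a real α > 0, and for λ > 0 let R_λ^{−1} be the bounded diagonal operator on ℓ²(ℕ,ℂ) with R_λ^{−1}|n⟩ = (1 + λ(n(n−1)⋯(n−k+1) + α^{2k}))^{−1}|n⟩. Then there exists c > 0 such that for all λ > 0 and all ψ ∈ ℓ²(ℕ,ℂ), λ²α^{2k} ‖((a†)^k + a^k)(R_λ^{−1}ψ)‖² ≤ c·λ·‖ψ‖². In particular, for 0 < λ < 1/c the operator λα^k((a†)^k + a^k)R_λ^{−1} extends to a bounded operator on ℓ²(ℕ,ℂ) of operator norm strictly less than one. -/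
noncomputable section

open scoped BigOperators ComplexConjugate

local notation "⟪" x ", " y "⟫" => @inner ℂ _ _ x y

/-- The Hilbert space `H = ℓ²(ℕ, ℂ)` of the quantum harmonic oscillator. -/
abbrev H : Type := lp (fun _ : ℕ => ℂ) 2

/-- The Fock (number) basis vector `|n⟩`. -/
def fock (n : ℕ) : H := lp.single 2 n 1

/-- Coefficientwise action of the annihilation operator `a`:
`(aψ)_n = √(n+1) ψ_{n+1}`. -/
def acoef (ψ : ℕ → ℂ) : ℕ → ℂ := fun n => (Real.sqrt (n + 1) : ℝ) * ψ (n + 1)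

/-- Coefficientwise action of the creation operator `a†`:
`(a†ψ)_n = √n ψ_{n-1}` for `n ≥ 1`, and `(a†ψ)_0 = 0`. -/
def adcoef (ψ : ℕ → ℂ) : ℕ → ℂ :=
  fun n => if n = 0 then 0 else (Real.sqrt n : ℝ) * ψ (n - 1)

/-- Coefficientwise action of `L = a^k − α^k I`. -/
def Lcoef (k : ℕ) (α : ℝ) (ψ : ℕ → ℂ) : ℕ → ℂ :=
  fun n => acoef^[k] ψ n - (α : ℂ) ^ k * ψ n

/-- Coefficientwise action of `L† = (a†)^k − α^k I`. -/
def Ldcoef (k : ℕ) (α : ℝ) (ψ : ℕ → ℂ) : ℕ → ℂ :=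
  fun n => adcoef^[k] ψ n - (α : ℂ) ^ k * ψ n

/-- Coefficientwise action of `L†L`. -/
def LdLcoef (k : ℕ) (α : ℝ) (ψ : ℕ → ℂ) : ℕ → ℂ := Ldcoef k α (Lcoef k α ψ)

/-- `ψ ∈ H_j`, the domain `{ψ : ∑ n^j |ψ_n|² < ∞}` (inside `ℓ²`). -/
def inHdom (j : ℕ) (ψ : ℕ → ℂ) : Prop :=
  Summable (fun n => ‖ψ n‖ ^ 2) ∧ Summable (fun n : ℕ => (n : ℝ) ^ j * ‖ψ n‖ ^ 2)

/-- Falling factorial `n(n−1)⋯(n−k+1)` (zero when `n < k`). -/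
def fallR (k n : ℕ) : ℝ := ∏ j ∈ Finset.range k, ((n : ℝ) - j)

/-- Rising product `(n+1)(n+2)⋯(n+k)`. -/
def riseR (k n : ℕ) : ℝ := ∏ j ∈ Finset.Icc 1 k, ((n : ℝ) + j)

/-- Eigenvalue `m(n)` of the commutator `M = [a^k, (a†)^k]` on `|n⟩`. -/
def mval (k n : ℕ) : ℝ := riseR k n - fallR k n

/-- The vector `L†|m⟩ = √((m+1)⋯(m+k)) |m+k⟩ − α^k |m⟩`. -/
def ldagFock (k : ℕ) (α : ℝ) (m : ℕ) : H :=
  ((Real.sqrt (riseR k m) : ℝ) : ℂ) • fock (m + k) - ((α : ℂ) ^ k) • fock m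

/-- The vector `L†L|m⟩`. -/
def ldlFock (k : ℕ) (α : ℝ) (m : ℕ) : H :=
  ((fallR k m + α ^ (2 * k) : ℝ) : ℂ) • fock m
    - ((α ^ k * Real.sqrt (fallR k m) : ℝ) : ℂ) • fock (m - k)
    - ((α ^ k * Real.sqrt (riseR k m) : ℝ) : ℂ) • fock (m + k)

/-- A bounded operator is a Hermitian trace-class operator (member of `K¹(H)`) when it is
self-adjoint and admits a spectral decomposition `T = ∑ c_μ |e_μ⟩⟨e_μ|` along a Hilbert basis
with absolutely summable real eigenvalues. -/
def IsHermitianTraceClass (T : H →L[ℂ] H) : Prop :=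
  IsSelfAdjoint T ∧
    ∃ (e : HilbertBasis ℕ ℂ H) (c : ℕ → ℝ),
      Summable (fun μ => |c μ|) ∧
      ∀ x : H, T x = ∑' μ, ((c μ : ℂ) * ⟪e μ, x⟫) • e μ

/-- Trace norm `tr|T| = ∑ |c_μ|` of a Hermitian trace-class operator. -/
def traceNorm (T : H →L[ℂ] H) : ℝ :=
  sInf {s | ∃ (e : HilbertBasis ℕ ℂ H) (c : ℕ → ℝ),
    Summable (fun μ => |c μ|) ∧
    (∀ x : H, T x = ∑' μ, ((c μ : ℂ) * ⟪e μ, x⟫) • e μ) ∧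
    s = ∑' μ, |c μ|}

/-- Trace of an operator, computed in the Fock basis. -/
def traceOf (T : H →L[ℂ] H) : ℝ := ∑' n, (⟪fock n, T (fock n)⟫).re

/-- Positive semidefinite bounded operator. -/
def IsPosSemidef (T : H →L[ℂ] H) : Prop :=
  IsSelfAdjoint T ∧ ∀ x : H, 0 ≤ (⟪x, T x⟫).re

/-- Loewner order on Hermitian operators. -/
def opLE (A B : H →L[ℂ] H) : Prop := IsPosSemidef (B - A)

/-- `(g, d)` is a spectral decomposition of `L†L`: a Hilbert basis of eigenvectors `g_μ`,
lying in the domain `H_{2k}`, with nonnegative eigenvalues `d_μ`. -/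
def IsSpectralBasis (k : ℕ) (α : ℝ) (g : HilbertBasis ℕ ℂ H) (d : ℕ → ℝ) : Prop :=
  (∀ μ, 0 ≤ d μ) ∧
    ∀ μ, inHdom (2 * k) (g μ) ∧
      ∀ n, LdLcoef k α (g μ) n = (d μ : ℂ) * (g μ) n

/-- Matrix entry `⟨g_μ| SρS |g_ν⟩ = √(1+d_μ)√(1+d_ν) ⟨g_μ|ρ|g_ν⟩` of `SρS`
in the eigenbasis `g` of `L†L`, where `S = √(I + L†L)`. -/
def SEntry (g : HilbertBasis ℕ ℂ H) (d : ℕ → ℝ) (ρ : H →L[ℂ] H) (μ ν : ℕ) : ℂ :=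
  ((Real.sqrt (1 + d μ) * Real.sqrt (1 + d ν) : ℝ) : ℂ) * ⟪g μ, ρ (g ν)⟫

/-- Membership in `K_L(H) = {ρ ∈ K¹(H) : tr|SρS| < ∞}`: `ρ` is Hermitian trace class and the
operator with matrix `SρS` is Hermitian trace class. -/
def memKL (g : HilbertBasis ℕ ℂ H) (d : ℕ → ℝ) (ρ : H →L[ℂ] H) : Prop :=
  IsHermitianTraceClass ρ ∧
    ∃ T : H →L[ℂ] H, IsHermitianTraceClass T ∧
      ∀ μ ν, ⟪g μ, T (g ν)⟫ = SEntry g d ρ μ ν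

/-- The norm `‖ρ‖_L = tr|SρS|` on `K_L(H)`. -/
def Lnorm (g : HilbertBasis ℕ ℂ H) (d : ℕ → ℝ) (ρ : H →L[ℂ] H) : ℝ :=
  sInf {s | ∃ T : H →L[ℂ] H, IsHermitianTraceClass T ∧
    (∀ μ ν, ⟪g μ, T (g ν)⟫ = SEntry g d ρ μ ν) ∧ s = traceNorm T}

/-- Fock-basis matrix entry `⟨m| 𝔄(ρ) |n⟩` of
`𝔄(ρ) = (L†Lρ + ρL†L)/2 − LρL†` (weak formulation). -/
def Amat (k : ℕ) (α : ℝ) (ρ : H →L[ℂ] H) (m n : ℕ) : ℂ :=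
  (1 / 2 : ℂ) * (⟪ldlFock k α m, ρ (fock n)⟫ + ⟪fock m, ρ (ldlFock k α n)⟫)
    - ⟪ldagFock k α m, ρ (ldagFock k α n)⟫

/-- `ρ` belongs to the domain of the superoperator `𝔄` on `K_L(H)`, with value `A = 𝔄(ρ)`. -/
def inDomA (k : ℕ) (α : ℝ) (g : HilbertBasis ℕ ℂ H) (d : ℕ → ℝ)
    (ρ A : H →L[ℂ] H) : Prop :=
  memKL g d ρ ∧ memKL g d A ∧ ∀ m n, ⟪fock m, A (fock n)⟫ = Amat k α ρ m n

/-- `(ρ, A)` is a `C¹` trajectory of the Lindblad master equation `dρ/dt = −𝔄(ρ)` in `K_L(H)`: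
`ρ(t)` lies in the domain of `𝔄` with `A(t) = 𝔄(ρ(t))`, the derivative of `ρ` in the
`‖·‖_L`-norm equals `−A(t)`, and `t ↦ A(t)` is `‖·‖_L`-continuous. -/
def IsLindbladTrajectory (k : ℕ) (α : ℝ) (g : HilbertBasis ℕ ℂ H) (d : ℕ → ℝ)
    (ρ A : ℝ → (H →L[ℂ] H)) : Prop :=
  (∀ t, 0 ≤ t → inDomA k α g d (ρ t) (A t)) ∧
  (∀ t, 0 ≤ t → Filter.Tendsto
      (fun h : ℝ => Lnorm g d (((1 / h : ℝ) : ℂ) • (ρ (t + h) - ρ t) + A t))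
      (nhdsWithin 0 {h : ℝ | h ≠ 0 ∧ 0 ≤ t + h}) (nhds 0)) ∧
  (∀ t, 0 ≤ t → Filter.Tendsto (fun s => Lnorm g d (A s - A t))
      (nhdsWithin t (Set.Ici 0)) (nhds 0))

/-- The coherent state amplitude `α_m = α e^{2iπm/k}` for `m = 1, …, k` (indexed by `Fin k`). -/
def catAmp (k : ℕ) (α : ℝ) (m : Fin k) : ℂ :=
  (α : ℂ) * Complex.exp (2 * Real.pi * Complex.I * (m.1 + 1) / k)

/-- Coefficients `e^{−|β|²/2} βⁿ/√(n!)` of the coherent state `|β⟩`. -/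
def cohCoeff (β : ℂ) : ℕ → ℂ :=
  fun n => ((Real.exp (-(‖β‖) ^ 2 / 2) : ℝ) : ℂ) * β ^ n
    / ((Real.sqrt (n.factorial) : ℝ) : ℂ)

open Classical in
/-- The coherent state `|β⟩ ∈ H`. -/
def coh (β : ℂ) : H :=
  if h : Memℓp (cohCoeff β) 2 then (⟨cohCoeff β, h⟩ : H) else 0

/-- The `k`-dimensional subspace `H_{α,k}` spanned by the coherent states `|α_m⟩`. -/
def catSpan (k : ℕ) (α : ℝ) : Submodule ℂ H :=
  Submodule.span ℂ (Set.range fun m : Fin k => coh (catAmp k α m))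

/-- The rank-one operator `|m⟩⟨n|`. -/
def ketbra (m n : ℕ) : H →L[ℂ] H := (innerSL ℂ (fock n)).smulRight (fock m)

/-- Coefficientwise action of `(a†)^k + a^k`. -/
def xcoef (k : ℕ) (ψ : ℕ → ℂ) : ℕ → ℂ :=
  fun n => adcoef^[k] ψ n + acoef^[k] ψ n

/-- Coefficientwise action of the inverse resolvent
`R_λ^{-1} = (I + λ(N(N−1)⋯(N−k+1) + α^{2k}))^{-1}`. -/
def rinvCoeff (k : ℕ) (α l : ℝ) (ψ : ℕ → ℂ) : ℕ → ℂ :=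
  fun n => (((1 + l * (fallR k n + α ^ (2 * k)))⁻¹ : ℝ) : ℂ) * ψ n

/-- Diagonal Fock-matrix entry `⟨n| 𝔏_L(ξ) |n⟩` of the Lindblad generator
`𝔏_L(ξ) = LξL† − ½L†Lξ − ½ξL†L` (weak formulation). -/
def lindDiag (k : ℕ) (α : ℝ) (ξ : H →L[ℂ] H) (n : ℕ) : ℂ :=
  ⟪ldagFock k α n, ξ (ldagFock k α n)⟫
    - (1 / 2 : ℂ) * ⟪ldlFock k α n, ξ (fock n)⟫
    - (1 / 2 : ℂ) * ⟪fock n, ξ (ldlFock k α n)⟫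

/-- The (unnormalized) `k`-legged Schrödinger cat state
`v_ℓ = ∑_{m=1}^k e^{2iπℓm/k} |α_m⟩`. -/
def catVec (k : ℕ) (α : ℝ) (l : ℤ) : H :=
  ∑ m ∈ Finset.Icc 1 k,
    Complex.exp (2 * Real.pi * Complex.I * l * m / k) •
      coh ((α : ℂ) * Complex.exp (2 * Real.pi * Complex.I * m / k))

/-- The vector `(I + λL†L)/2 |m⟩`. -/
def resFock (k : ℕ) (α l : ℝ) (m : ℕ) : H :=
  (1 / 2 : ℂ) • (fock m + ((l : ℝ) : ℂ) • ldlFock k α m)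

/-- Weak (matrix-element) formulation of the Sylvester-type equation
`((I+λL†L)/2)ρ + ρ((I+λL†L)/2) = f + rλ LρL†`. -/
def sylvEq (k : ℕ) (α l r : ℝ) (f ρ : H →L[ℂ] H) : Prop :=
  ∀ m n, ⟪resFock k α l m, ρ (fock n)⟫ + ⟪fock m, ρ (resFock k α l n)⟫
    = ⟪fock m, f (fock n)⟫ + ((r * l : ℝ) : ℂ) * ⟪ldagFock k α m, ρ (ldagFock k α n)⟫

/-- `m(n)` as an integer: `(n+1)(n+2)⋯(n+k) − n(n−1)⋯(n−k+1)`. -/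
def mInt (k n : ℕ) : ℤ :=
  (∏ j ∈ Finset.Icc 1 k, ((n : ℤ) + j)) - ∏ j ∈ Finset.range k, ((n : ℤ) - j)

/-!
In the Fock basis `(a†)^k` shifts up by `k` with weight `√(n(n-1)⋯(n-k+1))` and `a^k` shifts
down by `k` with weight `√((n+1)⋯(n+k))`, so `‖((a†)^k + a^k) φ‖² ≤ 4 ∑ (n+1)⋯(n+k) |φₙ|²`.
The rising product is at most `3^k n(n-1)⋯(n-k+1) + (3k)^k`, hence a constant multiple of
`Dₙ = n(n-1)⋯(n-k+1) + α^{2k}`, and for `φ = R_λ^{-1} ψ` the elementary bound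
`λ Dₙ ≤ (1 + λ Dₙ)²` turns this into `‖((a†)^k + a^k) φ‖² ≤ (C / λ) ‖ψ‖²`. The operator
`λ α^k ((a†)^k + a^k) R_λ^{-1}` therefore has norm at most `√(cλ)` with
`c = 4 (3^k α^{2k} + (3k)^k)`.
-/

lemma fallR_eq_zero_of_lt {k n : ℕ} (h : n < k) : fallR k n = 0 :=
  Finset.prod_eq_zero (Finset.mem_range.mpr h) (by simp)

lemma fallR_nonneg (k n : ℕ) : 0 ≤ fallR k n := by
  rcases lt_or_ge n k with h | h
  · exact (fallR_eq_zero_of_lt h).ge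
  · refine Finset.prod_nonneg fun j hj => sub_nonneg.mpr ?_
    exact_mod_cast (Finset.mem_range.mp hj).le.trans h

lemma fallR_succ_succ (k n : ℕ) : fallR (k + 1) (n + 1) = (n + 1) * fallR k n := by
  simp only [fallR, Finset.prod_range_succ', Nat.cast_add, Nat.cast_one, Nat.cast_zero, sub_zero]
  rw [mul_comm]
  congr 1
  exact Finset.prod_congr rfl fun j _ => by ring

lemma riseR_eq_prod_range (k n : ℕ) : riseR k n = ∏ j ∈ Finset.range k, ((n : ℝ) + j + 1) := by
  rw [riseR, ← Finset.Ico_add_one_right_eq_Icc, Finset.prod_Ico_eq_prod_range]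
  exact Finset.prod_congr rfl fun j _ => by push_cast; ring

lemma riseR_pos (k n : ℕ) : 0 < riseR k n := by
  rw [riseR_eq_prod_range]
  exact Finset.prod_pos fun j _ => by positivity

lemma riseR_succ (k n : ℕ) : riseR (k + 1) n = (n + 1) * riseR k (n + 1) := by
  simp only [riseR_eq_prod_range, Finset.prod_range_succ', Nat.cast_add, Nat.cast_one,
    Nat.cast_zero, add_zero]
  rw [mul_comm]
  congr 1
  exact Finset.prod_congr rfl fun j _ => by ring

lemma fallR_add_self (k n : ℕ) : fallR k (n + k) = riseR k n := by
  induction k with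
  | zero => simp [fallR, riseR]
  | succ k ih =>
    rw [← add_assoc, fallR_succ_succ, ih, riseR_eq_prod_range, riseR_eq_prod_range,
      Finset.prod_range_succ]
    push_cast
    ring

lemma fallR_le_riseR (k n : ℕ) : fallR k n ≤ riseR k n := by
  rcases lt_or_ge n k with h | h
  · exact (fallR_eq_zero_of_lt h).trans_le (riseR_pos k n).le
  · rw [fallR, riseR_eq_prod_range]
    refine Finset.prod_le_prod (fun j hj => sub_nonneg.mpr ?_) fun j _ => by linarith
    exact_mod_cast (Finset.mem_range.mp hj).le.trans h

/-- For `n ≥ 2k` every factor `n + j + 1` of `riseR k n` is at most `3 (n - j)`; below `2k`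
every factor is at most `3k`. -/
lemma riseR_le_three_pow_mul_fallR_add (k n : ℕ) :
    riseR k n ≤ 3 ^ k * fallR k n + (3 * k) ^ k := by
  have hk : (0 : ℝ) ≤ (3 * k) ^ k := by positivity
  rw [riseR_eq_prod_range]
  rcases le_or_gt (2 * k) n with h | h
  · have hn : 2 * (k : ℝ) ≤ n := by exact_mod_cast h
    calc ∏ j ∈ Finset.range k, ((n : ℝ) + j + 1)
        ≤ ∏ j ∈ Finset.range k, (3 * ((n : ℝ) - j)) := by
          refine Finset.prod_le_prod (fun j _ => by positivity) fun j hj => ?_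
          have hj : (j : ℝ) + 1 ≤ k := by exact_mod_cast Finset.mem_range.mp hj
          linarith
      _ = 3 ^ k * fallR k n := by rw [Finset.prod_mul_distrib, Finset.prod_const,
          Finset.card_range, fallR]
      _ ≤ _ := le_add_of_nonneg_right hk
  · have hn : (n : ℝ) + 1 ≤ 2 * k := by exact_mod_cast h
    calc ∏ j ∈ Finset.range k, ((n : ℝ) + j + 1)
        ≤ ∏ j ∈ Finset.range k, (3 * (k : ℝ)) := by
          refine Finset.prod_le_prod (fun j _ => by positivity) fun j hj => ?_
          have hj : (j : ℝ) + 1 ≤ k := by exact_mod_cast Finset.mem_range.mp hj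
          linarith
      _ = (3 * k) ^ k := by rw [Finset.prod_const, Finset.card_range]
      _ ≤ _ := le_add_of_nonneg_left (by have := fallR_nonneg k n; positivity)

lemma riseR_le_mul_fallR_add (k n : ℕ) {β : ℝ} (hβ : 0 < β) :
    riseR k n ≤ (3 ^ k + (3 * k) ^ k / β) * (fallR k n + β) := by
  have := fallR_nonneg k n
  have h₁ : (0 : ℝ) ≤ 3 ^ k * β := by positivity
  have h₂ : (0 : ℝ) ≤ (3 * k) ^ k / β * fallR k n := by positivity
  calc riseR k n ≤ 3 ^ k * fallR k n + (3 * k) ^ k := riseR_le_three_pow_mul_fallR_add k n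
    _ ≤ _ := by rw [add_mul, mul_add, mul_add, div_mul_cancel₀ _ hβ.ne']; linarith

lemma riseR_mul_inv_sq_le (k n : ℕ) {β l : ℝ} (hβ : 0 < β) (hl : 0 < l) :
    riseR k n * ((1 + l * (fallR k n + β))⁻¹) ^ 2 ≤ (3 ^ k + (3 * k) ^ k / β) / l := by
  set D := fallR k n + β
  have hD : 0 < D := by have := fallR_nonneg k n; positivity
  have hDw : D * ((1 + l * D)⁻¹) ^ 2 ≤ 1 / l := by
    rw [inv_pow, ← div_eq_mul_inv, div_le_div_iff₀ (by positivity) hl]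
    nlinarith [mul_pos hl hD]
  calc riseR k n * ((1 + l * D)⁻¹) ^ 2
      ≤ (3 ^ k + (3 * k) ^ k / β) * D * ((1 + l * D)⁻¹) ^ 2 :=
        mul_le_mul_of_nonneg_right (riseR_le_mul_fallR_add k n hβ) (by positivity)
    _ ≤ (3 ^ k + (3 * k) ^ k / β) * (1 / l) := by
        rw [mul_assoc]; exact mul_le_mul_of_nonneg_left hDw (by positivity)
    _ = _ := mul_one_div _ _

lemma adcoef_iterate_apply (k : ℕ) (ψ : ℕ → ℂ) (n : ℕ) :
    adcoef^[k] ψ n = (Real.sqrt (fallR k n) : ℂ) * ψ (n - k) := by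
  induction k generalizing n with
  | zero => simp [fallR]
  | succ k ih =>
    rw [Function.iterate_succ_apply']
    cases n with
    | zero => simp [adcoef, fallR_eq_zero_of_lt (Nat.succ_pos k)]
    | succ n =>
      rw [adcoef, if_neg n.succ_ne_zero, Nat.add_sub_cancel, ih, fallR_succ_succ,
        Real.sqrt_mul (by positivity), Nat.add_sub_add_right]
      push_cast
      ring

lemma acoef_iterate_apply (k : ℕ) (ψ : ℕ → ℂ) (n : ℕ) :
    acoef^[k] ψ n = (Real.sqrt (riseR k n) : ℂ) * ψ (n + k) := by
  induction k generalizing n with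
  | zero => simp [riseR]
  | succ k ih =>
    rw [Function.iterate_succ_apply', acoef, ih, riseR_succ, Real.sqrt_mul (by positivity),
      add_right_comm n 1 k, add_assoc n k 1]
    push_cast
    ring

lemma hasSum_norm_sq_adcoef_iterate (k : ℕ) {f : ℕ → ℂ} {s : ℝ}
    (hf : HasSum (fun n => riseR k n * ‖f n‖ ^ 2) s) :
    HasSum (fun n => ‖adcoef^[k] f n‖ ^ 2) s := by
  have hshift : ∀ n, ‖adcoef^[k] f (n + k)‖ ^ 2 = riseR k n * ‖f n‖ ^ 2 := fun n => by
    rw [adcoef_iterate_apply, norm_mul, Complex.norm_real, Real.norm_of_nonneg (Real.sqrt_nonneg _),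
      mul_pow, Real.sq_sqrt (fallR_nonneg _ _), fallR_add_self, Nat.add_sub_cancel]
  rw [← (add_left_injective k).hasSum_iff]
  · simpa only [Function.comp_def, hshift] using hf
  · intro n hn
    have hnk : n < k := by
      by_contra! h
      exact hn ⟨n - k, Nat.sub_add_cancel h⟩
    simp [adcoef_iterate_apply, fallR_eq_zero_of_lt hnk]

lemma norm_sq_acoef_iterate_le (k : ℕ) (f : ℕ → ℂ) (n : ℕ) :
    ‖acoef^[k] f n‖ ^ 2 ≤ riseR k (n + k) * ‖f (n + k)‖ ^ 2 := by
  rw [acoef_iterate_apply, norm_mul, Complex.norm_real, Real.norm_of_nonneg (Real.sqrt_nonneg _),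
    mul_pow, Real.sq_sqrt (riseR_pos _ _).le, ← fallR_add_self]
  exact mul_le_mul_of_nonneg_right (fallR_le_riseR _ _) (sq_nonneg _)

lemma xcoef_norm_sq_le (k : ℕ) {f : ℕ → ℂ} (hf : Summable fun n => riseR k n * ‖f n‖ ^ 2) :
    Summable (fun n => ‖xcoef k f n‖ ^ 2) ∧
      ∑' n, ‖xcoef k f n‖ ^ 2 ≤ 4 * ∑' n, riseR k n * ‖f n‖ ^ 2 := by
  have hf0 : ∀ n, 0 ≤ riseR k n * ‖f n‖ ^ 2 := fun n => by have := riseR_pos k n; positivity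
  have had := hasSum_norm_sq_adcoef_iterate k hf.hasSum
  have hshift : Summable fun n => riseR k (n + k) * ‖f (n + k)‖ ^ 2 :=
    (summable_nat_add_iff k).mpr hf
  have hac : Summable fun n => ‖acoef^[k] f n‖ ^ 2 :=
    hshift.of_nonneg_of_le (fun _ => sq_nonneg _) (norm_sq_acoef_iterate_le k f)
  have hpoint : ∀ n, ‖xcoef k f n‖ ^ 2 ≤ 2 * (‖adcoef^[k] f n‖ ^ 2 + ‖acoef^[k] f n‖ ^ 2) :=
    fun n => (pow_le_pow_left₀ (norm_nonneg _) (norm_add_le _ _) 2).trans add_sq_le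
  have hsum := (had.summable.add hac).mul_left 2
  refine ⟨hsum.of_nonneg_of_le (fun _ => sq_nonneg _) hpoint, ?_⟩
  calc ∑' n, ‖xcoef k f n‖ ^ 2
      ≤ 2 * (∑' n, ‖adcoef^[k] f n‖ ^ 2 + ∑' n, ‖acoef^[k] f n‖ ^ 2) := by
        rw [← had.summable.tsum_add hac, ← tsum_mul_left]
        exact (hsum.of_nonneg_of_le (fun _ => sq_nonneg _) hpoint).tsum_le_tsum hpoint hsum
    _ ≤ 2 * (∑' n, riseR k n * ‖f n‖ ^ 2 + ∑' n, riseR k n * ‖f n‖ ^ 2) := by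
        refine mul_le_mul_of_nonneg_left (add_le_add had.tsum_eq.le ?_) zero_le_two
        calc ∑' n, ‖acoef^[k] f n‖ ^ 2 ≤ ∑' n, riseR k (n + k) * ‖f (n + k)‖ ^ 2 :=
              hac.tsum_le_tsum (norm_sq_acoef_iterate_le k f) hshift
          _ ≤ _ := tsum_comp_le_tsum_of_inj hf hf0 (add_left_injective k)
    _ = 4 * ∑' n, riseR k n * ‖f n‖ ^ 2 := by ring

lemma lp.summable_norm_sq {ι E : Type*} [NormedAddCommGroup E] (ψ : lp (fun _ : ι => E) 2) :
    Summable fun i => ‖ψ i‖ ^ 2 := by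
  simpa using (lp.memℓp ψ).summable (p := 2) (by norm_num)

lemma lp.norm_sq_eq_tsum {ι E : Type*} [NormedAddCommGroup E] (ψ : lp (fun _ : ι => E) 2) :
    ‖ψ‖ ^ 2 = ∑' i, ‖ψ i‖ ^ 2 := by
  simpa using lp.norm_rpow_eq_tsum (p := 2) (by norm_num) ψ

lemma xcoef_rinvCoeff_norm_sq_le (k : ℕ) {α l : ℝ} (hα : 0 < α) (hl : 0 < l) (ψ : H) :
    Summable (fun n => ‖xcoef k (rinvCoeff k α l ψ) n‖ ^ 2) ∧
      l ^ 2 * α ^ (2 * k) * ∑' n, ‖xcoef k (rinvCoeff k α l ψ) n‖ ^ 2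
        ≤ 4 * (3 ^ k * α ^ (2 * k) + (3 * k) ^ k) * l * ‖ψ‖ ^ 2 := by
  set K := (3 ^ k + (3 * k) ^ k / α ^ (2 * k)) / l
  have hweight : ∀ n, riseR k n * ‖rinvCoeff k α l ψ n‖ ^ 2 ≤ K * ‖ψ n‖ ^ 2 := fun n => by
    rw [rinvCoeff, norm_mul, Complex.norm_real, Real.norm_eq_abs, mul_pow, sq_abs, ← mul_assoc]
    exact mul_le_mul_of_nonneg_right (riseR_mul_inv_sq_le k n (by positivity) hl) (sq_nonneg _)
  have hψ := lp.summable_norm_sq ψ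
  have hsum : Summable fun n => riseR k n * ‖rinvCoeff k α l ψ n‖ ^ 2 :=
    (hψ.mul_left K).of_nonneg_of_le (fun n => by have := riseR_pos k n; positivity) hweight
  have hK : ∑' n, riseR k n * ‖rinvCoeff k α l ψ n‖ ^ 2 ≤ K * ‖ψ‖ ^ 2 := by
    rw [lp.norm_sq_eq_tsum, ← tsum_mul_left]
    exact hsum.tsum_le_tsum hweight (hψ.mul_left K)
  obtain ⟨hx, hxle⟩ := xcoef_norm_sq_le k hsum
  refine ⟨hx, ?_⟩
  calc l ^ 2 * α ^ (2 * k) * ∑' n, ‖xcoef k (rinvCoeff k α l ψ) n‖ ^ 2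
      ≤ l ^ 2 * α ^ (2 * k) * (4 * (K * ‖ψ‖ ^ 2)) := by
        gcongr
        exact hxle.trans (mul_le_mul_of_nonneg_left hK zero_le_four)
    _ = _ := by
        simp only [K]
        field_simp

lemma exists_lp_two_clm_of_tsum_norm_sq_le {ι 𝕜 : Type*} [NontriviallyNormedField 𝕜]
    (T : (ι → 𝕜) →ₗ[𝕜] (ι → 𝕜)) {K : ℝ} (hK : 0 ≤ K)
    (hT : ∀ ψ : lp (fun _ : ι => 𝕜) 2,
      Summable (fun i => ‖T ψ i‖ ^ 2) ∧ ∑' i, ‖T ψ i‖ ^ 2 ≤ K * ‖ψ‖ ^ 2) :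
    ∃ B : lp (fun _ : ι => 𝕜) 2 →L[𝕜] lp (fun _ : ι => 𝕜) 2,
      ‖B‖ ≤ Real.sqrt K ∧ ∀ ψ i, B ψ i = T ψ i := by
  let L : lp (fun _ : ι => 𝕜) 2 →ₗ[𝕜] lp (fun _ : ι => 𝕜) 2 :=
    { toFun := fun ψ => ⟨T ψ, memℓp_gen (by simpa using (hT ψ).1)⟩
      map_add' := fun ψ φ => lp.ext ((congrArg T (lp.coeFn_add ψ φ)).trans (map_add T _ _))
      map_smul' := fun c ψ => lp.ext (by simp) }
  have hL : ∀ ψ, ‖L ψ‖ ≤ Real.sqrt K * ‖ψ‖ := fun ψ => by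
    rw [← Real.sqrt_sq (norm_nonneg ψ), ← Real.sqrt_mul hK]
    refine Real.le_sqrt_of_sq_le ?_
    rw [lp.norm_sq_eq_tsum]
    exact (hT ψ).2
  exact ⟨L.mkContinuous _ hL, L.mkContinuous_norm_le (Real.sqrt_nonneg K) hL, fun _ _ => rfl⟩

def perturbationₗ (k : ℕ) (α l : ℝ) : (ℕ → ℂ) →ₗ[ℂ] (ℕ → ℂ) where
  toFun ψ n := ((l * α ^ k : ℝ) : ℂ) * xcoef k (rinvCoeff k α l ψ) n
  map_add' ψ φ := by
    ext n
    simp only [xcoef, adcoef_iterate_apply, acoef_iterate_apply, rinvCoeff, Pi.add_apply]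
    ring
  map_smul' c ψ := by
    ext n
    simp only [xcoef, adcoef_iterate_apply, acoef_iterate_apply, rinvCoeff, Pi.smul_apply,
      smul_eq_mul, RingHom.id_apply]
    ring

lemma norm_sq_perturbationₗ_apply (k : ℕ) (α l : ℝ) (ψ : ℕ → ℂ) (n : ℕ) :
    ‖perturbationₗ k α l ψ n‖ ^ 2 = l ^ 2 * α ^ (2 * k) * ‖xcoef k (rinvCoeff k α l ψ) n‖ ^ 2 := by
  change ‖((l * α ^ k : ℝ) : ℂ) * _‖ ^ 2 = _
  rw [norm_mul, Complex.norm_real, Real.norm_eq_abs, mul_pow, sq_abs, mul_pow, ← pow_mul,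
    mul_comm k 2]

theorem perturbation_bounded_general (k : ℕ) (α : ℝ) (hα : 0 < α) :
    ∃ c : ℝ, 0 < c ∧
      (∀ l : ℝ, 0 < l → ∀ ψ : H,
        Summable (fun n => ‖xcoef k (rinvCoeff k α l ψ) n‖ ^ 2) ∧
        l ^ 2 * α ^ (2 * k) * (∑' n, ‖xcoef k (rinvCoeff k α l ψ) n‖ ^ 2)
          ≤ c * l * ‖ψ‖ ^ 2) ∧
      (∀ l : ℝ, 0 < l → l < 1 / c →
        ∃ B : H →L[ℂ] H, ‖B‖ < 1 ∧
          ∀ (ψ : H) (n : ℕ),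
            B ψ n = ((l * α ^ k : ℝ) : ℂ) * xcoef k (rinvCoeff k α l ψ) n) := by
  set c := 4 * (3 ^ k * α ^ (2 * k) + (3 * k) ^ k)
  have hc : 0 < c := by positivity
  have estimate := fun l (hl : 0 < l) => xcoef_rinvCoeff_norm_sq_le k hα hl
  refine ⟨c, hc, estimate, fun l hl hlc => ?_⟩
  obtain ⟨B, hB, hBψ⟩ := exists_lp_two_clm_of_tsum_norm_sq_le (perturbationₗ k α l)
    (by positivity : 0 ≤ c * l) fun ψ => by
      simp only [norm_sq_perturbationₗ_apply, tsum_mul_left]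
      exact ⟨(estimate l hl ψ).1.mul_left _, (estimate l hl ψ).2⟩
  refine ⟨B, hB.trans_lt ?_, hBψ⟩
  rw [Real.sqrt_lt' one_pos, one_pow]
  rwa [lt_div_iff₀ hc, mul_comm] at hlc

/-- There is `c > 0` with
`λ²α^{2k}‖((a†)^k + a^k)(R_λ^{−1}ψ)‖² ≤ cλ‖ψ‖²` for all `λ > 0`, `ψ ∈ ℓ²`; hence for
`0 < λ < 1/c` the operator `λα^k((a†)^k + a^k)R_λ^{−1}` extends to a bounded operator of
norm `< 1`. -/
theorem perturbation_bounded (k : ℕ) (hk : 1 ≤ k) (α : ℝ) (hα : 0 < α) :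
    ∃ c : ℝ, 0 < c ∧
      (∀ l : ℝ, 0 < l → ∀ ψ : H,
        Summable (fun n => ‖xcoef k (rinvCoeff k α l ψ) n‖ ^ 2) ∧
        l ^ 2 * α ^ (2 * k) * (∑' n, ‖xcoef k (rinvCoeff k α l ψ) n‖ ^ 2)
          ≤ c * l * ‖ψ‖ ^ 2) ∧
      (∀ l : ℝ, 0 < l → l < 1 / c →
        ∃ B : H →L[ℂ] H, ‖B‖ < 1 ∧
          ∀ (ψ : H) (n : ℕ),
            B ψ n = ((l * α ^ k : ℝ) : ℂ) * xcoef k (rinvCoeff k α l ψ) n) :=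
  perturbation_bounded_general k α hα

end
end

section
/- Fix an integer k ≥ 1 and a real α > 0. The kernel of L = a^k − α^k I, i.e. the set of ψ ∈ H_k with a^k ψ = α^k ψ, equals the k-dimensional complex subspace H_{α,k} = span{|α_m⟩ : m = 1,…,k}, where α_m = α e^{2iπm/k} and |α_m⟩ is the coherent state of amplitude α_m. Equivalently, ψ = ∑_n ψ_n|n⟩ ∈ H_k satisfies Lψ = 0 if and only if its coefficients satisfy the recurrence ψ_{n+k} = α^k ψ_n / √((n+k)(n+k−1)⋯(n+1)) for all n ≥ 0, and every such ψ is a linear combination of the k coherent states |α_1⟩, …, |α_k⟩. -/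
noncomputable section

open scoped BigOperators ComplexConjugate

local notation "⟪" x ", " y "⟫" => @inner ℂ _ _ x y

/-! `a^k` shifts Fock coefficients down by `k` with weight `√((n+1)⋯(n+k))`, so `Lψ = 0` is a
`k`-step recurrence and its solutions are determined by `ψ_0, …, ψ_{k-1}`. Each `|α_m⟩` solves it
because `α_m^k = α^k`, and the first `k` coefficients of `|α_1⟩, …, |α_k⟩` form a Vandermonde
matrix in the distinct `α_m`, rescaled by nonzero diagonal factors; hence these states are
independent and reach every initial datum. -/

lemma riseR_eq_ascFactorial (k n : ℕ) : riseR k n = ((n + 1).ascFactorial k : ℝ) := by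
  induction k with
  | zero => simp [riseR]
  | succ k ih =>
    rw [riseR, Finset.prod_Icc_succ_top (by omega), ← riseR, ih, Nat.ascFactorial_succ]
    push_cast
    ring

lemma sqrt_riseR_ne_zero (k n : ℕ) : (Real.sqrt (riseR k n) : ℂ) ≠ 0 := by
  exact_mod_cast (Real.sqrt_pos.mpr (riseR_pos k n)).ne'

lemma Lcoef_apply (k : ℕ) (α : ℝ) (ψ : ℕ → ℂ) (n : ℕ) :
    Lcoef k α ψ n = (Real.sqrt (riseR k n) : ℂ) * ψ (n + k) - (α : ℂ) ^ k * ψ n := by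
  rw [Lcoef, acoef_iterate_apply]

lemma forall_Lcoef_eq_zero_iff (k : ℕ) (α : ℝ) (ψ : ℕ → ℂ) :
    (∀ n, Lcoef k α ψ n = 0) ↔
      ∀ n, ψ (n + k) = (α : ℂ) ^ k * ψ n / (Real.sqrt (riseR k n) : ℂ) := by
  refine forall_congr' fun n => ?_
  rw [Lcoef_apply, sub_eq_zero, eq_div_iff (sqrt_riseR_ne_zero k n), mul_comm]

lemma cohCoeff_add (β : ℂ) (n k : ℕ) :
    cohCoeff β (n + k) = β ^ k * cohCoeff β n / (Real.sqrt (riseR k n) : ℂ) := by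
  have hfact : ((n + k).factorial : ℝ) = n.factorial * riseR k n := by
    rw [riseR_eq_ascFactorial, ← Nat.factorial_mul_ascFactorial, Nat.cast_mul]
  have hn : (Real.sqrt n.factorial : ℂ) ≠ 0 := by
    exact_mod_cast (Real.sqrt_pos.mpr (by positivity : (0 : ℝ) < n.factorial)).ne'
  have hr := sqrt_riseR_ne_zero k n
  rw [cohCoeff, cohCoeff, hfact, Real.sqrt_mul (Nat.cast_nonneg _), Complex.ofReal_mul]
  field_simp
  ring

lemma norm_cohCoeff_sq (β : ℂ) (n : ℕ) :
    ‖cohCoeff β n‖ ^ 2 = Real.exp (-‖β‖ ^ 2) * ((‖β‖ ^ 2) ^ n / n.factorial) := by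
  rw [cohCoeff, norm_div, norm_mul, Complex.norm_real, Complex.norm_real, norm_pow,
    Real.norm_of_nonneg (Real.exp_pos _).le, Real.norm_of_nonneg (Real.sqrt_nonneg _), div_pow,
    mul_pow, Real.sq_sqrt (Nat.cast_nonneg _), ← Real.exp_nat_mul, ← pow_mul, mul_comm n 2, pow_mul,
    Nat.cast_ofNat, mul_div_cancel₀ _ two_ne_zero, mul_div_assoc]

lemma cohCoeff_memℓp (β : ℂ) : Memℓp (cohCoeff β) 2 := by
  have hsum : Summable fun n => ‖cohCoeff β n‖ ^ 2 := by
    simp_rw [norm_cohCoeff_sq]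
    exact (Real.summable_pow_div_factorial _).mul_left _
  exact memℓp_gen (by simpa using hsum)

lemma coh_apply (β : ℂ) (n : ℕ) : coh β n = cohCoeff β n := by
  rw [coh, dif_pos (cohCoeff_memℓp β)]

def Lmap (k : ℕ) (α : ℝ) : H →ₗ[ℂ] ℕ → ℂ where
  toFun ψ := Lcoef k α ψ
  map_add' ψ φ := by
    ext n
    simp only [Lcoef_apply, lp.coeFn_add, Pi.add_apply]
    ring
  map_smul' c ψ := by
    ext n
    simp only [Lcoef_apply, lp.coeFn_smul, Pi.smul_apply, smul_eq_mul, RingHom.id_apply]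
    ring

lemma mem_ker_Lmap (k : ℕ) (α : ℝ) (ψ : H) :
    ψ ∈ LinearMap.ker (Lmap k α) ↔ ∀ n, Lcoef k α ψ n = 0 := by
  rw [LinearMap.mem_ker, funext_iff]
  rfl

lemma coh_mem_ker_Lmap {k : ℕ} {α : ℝ} {β : ℂ} (hβ : β ^ k = (α : ℂ) ^ k) :
    coh β ∈ LinearMap.ker (Lmap k α) := by
  rw [mem_ker_Lmap, forall_Lcoef_eq_zero_iff]
  intro n
  rw [coh_apply, coh_apply, cohCoeff_add, hβ]

def firstCoeffs (k : ℕ) : H →ₗ[ℂ] Fin k → ℂ where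
  toFun ψ n := ψ n
  map_add' _ _ := rfl
  map_smul' _ _ := rfl

lemma eq_zero_of_mem_ker_Lmap {k : ℕ} (hk : k ≠ 0) {α : ℝ} {ψ : H}
    (hψ : ψ ∈ LinearMap.ker (Lmap k α)) (hlow : firstCoeffs k ψ = 0) : ψ = 0 := by
  rw [mem_ker_Lmap, forall_Lcoef_eq_zero_iff] at hψ
  suffices ∀ n, ψ n = 0 from lp.ext (funext this)
  intro n
  induction n using Nat.strong_induction_on with
  | _ n ih =>
    rcases lt_or_ge n k with hn | hn
    · exact congrFun hlow ⟨n, hn⟩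
    · obtain ⟨m, rfl⟩ := Nat.exists_eq_add_of_le' hn
      rw [hψ, ih m (by omega), mul_zero, zero_div]

def cohMatrix {k : ℕ} (β : Fin k → ℂ) : Matrix (Fin k) (Fin k) ℂ :=
  Matrix.of fun m n => cohCoeff (β m) n

lemma cohMatrix_eq {k : ℕ} (β : Fin k → ℂ) :
    cohMatrix β = Matrix.diagonal (fun m => (Real.exp (-‖β m‖ ^ 2 / 2) : ℂ))
      * Matrix.vandermonde β
      * Matrix.diagonal (fun n : Fin k => (Real.sqrt (n : ℕ).factorial : ℂ)⁻¹) := by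
  ext m n
  rw [Matrix.mul_diagonal, Matrix.diagonal_mul, Matrix.vandermonde_apply, cohMatrix,
    Matrix.of_apply, cohCoeff, div_eq_mul_inv]

lemma det_cohMatrix_ne_zero {k : ℕ} {β : Fin k → ℂ} (hβ : Function.Injective β) :
    (cohMatrix β).det ≠ 0 := by
  rw [cohMatrix_eq, Matrix.det_mul, Matrix.det_mul, Matrix.det_diagonal, Matrix.det_diagonal]
  refine mul_ne_zero (mul_ne_zero ?_ (Matrix.det_vandermonde_ne_zero_iff.mpr hβ)) ?_
  · exact Finset.prod_ne_zero_iff.mpr fun m _ => by exact_mod_cast (Real.exp_pos _).ne'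
  · refine Finset.prod_ne_zero_iff.mpr fun n _ => inv_ne_zero ?_
    exact_mod_cast (Real.sqrt_pos.mpr (by positivity : (0 : ℝ) < (n : ℕ).factorial)).ne'

lemma linearIndependent_firstCoeffs_coh {k : ℕ} {β : Fin k → ℂ} (hβ : Function.Injective β) :
    LinearIndependent ℂ fun m => firstCoeffs k (coh (β m)) := by
  have hrows : (fun m => firstCoeffs k (coh (β m))) = fun m => cohMatrix β m := by
    ext m n
    exact coh_apply _ _
  rw [hrows]
  exact Matrix.linearIndependent_rows_of_det_ne_zero (det_cohMatrix_ne_zero hβ)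

lemma linearIndependent_coh {k : ℕ} {β : Fin k → ℂ} (hβ : Function.Injective β) :
    LinearIndependent ℂ fun m => coh (β m) :=
  (linearIndependent_firstCoeffs_coh hβ).of_comp (firstCoeffs k)

lemma span_coh_le_ker_Lmap {k : ℕ} {α : ℝ} {β : Fin k → ℂ} (hpow : ∀ m, β m ^ k = (α : ℂ) ^ k) :
    Submodule.span ℂ (Set.range fun m => coh (β m)) ≤ LinearMap.ker (Lmap k α) :=
  Submodule.span_le.mpr <| Set.range_subset_iff.mpr fun m => coh_mem_ker_Lmap (hpow m)

lemma ker_Lmap_eq_span_coh {k : ℕ} (hk : k ≠ 0) {α : ℝ} {β : Fin k → ℂ}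
    (hβ : Function.Injective β) (hpow : ∀ m, β m ^ k = (α : ℂ) ^ k) :
    LinearMap.ker (Lmap k α) = Submodule.span ℂ (Set.range fun m => coh (β m)) := by
  refine le_antisymm (fun ψ hψ => ?_) (span_coh_le_ker_Lmap hpow)
  set S := Submodule.span ℂ (Set.range fun m => coh (β m))
  have hmap : S.map (firstCoeffs k) = ⊤ := by
    rw [Submodule.map_span, ← Set.range_comp]
    exact (linearIndependent_firstCoeffs_coh hβ).span_eq_top_of_card_eq_finrank' (by simp)
  obtain ⟨φ, hφ, hφψ⟩ : ∃ φ ∈ S, firstCoeffs k φ = firstCoeffs k ψ := by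
    rw [← Submodule.mem_map, hmap]
    trivial
  have hψφ : ψ - φ = 0 :=
    eq_zero_of_mem_ker_Lmap hk (sub_mem hψ (span_coh_le_ker_Lmap hpow hφ))
      (by rw [map_sub, hφψ, sub_self])
  rwa [sub_eq_zero.mp hψφ]

lemma catAmp_eq (k : ℕ) (α : ℝ) (m : Fin k) :
    catAmp k α m = α * Complex.exp (2 * Real.pi * Complex.I / k) ^ ((m : ℕ) + 1) := by
  rw [catAmp, ← Complex.exp_nat_mul]
  push_cast
  ring_nf

lemma catAmp_pow {k : ℕ} (α : ℝ) (m : Fin k) : catAmp k α m ^ k = (α : ℂ) ^ k := by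
  rw [catAmp_eq, mul_pow, ← pow_mul, mul_comm _ k, pow_mul,
    (Complex.isPrimitiveRoot_exp k m.pos.ne').pow_eq_one, one_pow, mul_one]

lemma catAmp_injective {k : ℕ} {α : ℝ} (hα : α ≠ 0) : Function.Injective (catAmp k α) := by
  intro a b hab
  have hζ := Complex.isPrimitiveRoot_exp k a.pos.ne'
  rw [catAmp_eq, catAmp_eq, pow_succ, pow_succ] at hab
  have hα' : (α : ℂ) ≠ 0 := by exact_mod_cast hα
  exact Fin.ext <| hζ.pow_inj a.2 b.2 <|
    mul_right_cancel₀ (hζ.ne_zero a.pos.ne') (mul_left_cancel₀ hα' hab)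

/-- The kernel of `L = a^k − α^k I` in `H_k` equals the `k`-dimensional
subspace `H_{α,k}` spanned by the coherent states `|α e^{2iπm/k}⟩`; equivalently `Lψ = 0` iff
the coefficients satisfy `ψ_{n+k} = α^k ψ_n / √((n+k)⋯(n+1))`. -/
theorem kernel_of_L_is_cat_span (k : ℕ) (hk : 1 ≤ k) (α : ℝ) (hα : 0 < α) :
    (∀ ψ : H, inHdom k ψ →
      (((∀ n, Lcoef k α ψ n = 0) ↔ ψ ∈ catSpan k α) ∧
       ((∀ n, Lcoef k α ψ n = 0) ↔
         ∀ n : ℕ, ψ (n + k) = (α : ℂ) ^ k * ψ n / ((Real.sqrt (riseR k n) : ℝ) : ℂ)))) ∧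
    Module.finrank ℂ (catSpan k α) = k := by
  have hinj := catAmp_injective (k := k) hα.ne'
  have hker : LinearMap.ker (Lmap k α) = catSpan k α :=
    ker_Lmap_eq_span_coh (by omega) hinj (catAmp_pow α)
  refine ⟨fun ψ _ => ⟨?_, forall_Lcoef_eq_zero_iff k α ψ⟩, ?_⟩
  · rw [← hker, mem_ker_Lmap]
  · rw [catSpan, finrank_span_eq_card (linearIndependent_coh hinj), Fintype.card_fin]

end
end

section
/- Fix an integer k ≥ 1, a real α > 0, and set L = a^k − α^k I. For every finite-rank operator ξ = ∑_{n,n'≤N} f_{n,n'} |n⟩⟨n'| (f_{n,n'} ∈ ℂ, N ∈ ℕ) and every integer m, the diagonal coefficients of 𝔏_L(ξ) = LξL† − ½L†Lξ − ½ξL†L satisfy ∑_{n∈ℕ} cos(2πmn/k) ⟨n|𝔏_L(ξ)|n⟩ = 0 and ∑_{n∈ℕ} sin(2πmn/k) ⟨n|𝔏_L(ξ)|n⟩ = 0 (the sums having finitely many nonzero terms). Equivalently, tr(Q^cos_m 𝔏_L(ξ)) = tr(Q^sin_m 𝔏_L(ξ)) = 0, where Q^cos_m = ∑_n cos(2πmn/k)|n⟩⟨n|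 and Q^sin_m = ∑_n sin(2πmn/k)|n⟩⟨n|. -/
/-! Write `m_n = n(n-1)⋯(n-k+1)` and `ξ_{pq} = ⟨p|ξ|q⟩`. Since `(n+1)⋯(n+k) = m_{n+k}`, the
diagonal entry `⟨n|𝔏_L(ξ)|n⟩` is the `k`-step difference `P(n+k) - P(n)` of
`P(n) = m_n ξ_{nn} - ½ α^k √m_n (ξ_{n-k,n} + ξ_{n,n-k})`. As `P` vanishes for `n < k` and beyond
the support of `ξ`, the sum against any `k`-periodic weight telescopes to zero, and
`cos(2πmn/k)`, `sin(2πmn/k)` are `k`-periodic in `n`. -/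

noncomputable section

open scoped BigOperators ComplexConjugate

local notation "⟪" x ", " y "⟫" => @inner ℂ _ _ x y

lemma inner_fock_fock (p q : ℕ) : ⟪fock p, fock q⟫ = if p = q then 1 else 0 := by
  by_cases h : p = q <;> simp [fock, lp.inner_single_left, h]

lemma norm_fock (n : ℕ) : ‖fock n‖ = 1 := by
  simp [fock, lp.norm_single]

lemma inner_fock_ketbra_fock (i j p q : ℕ) :
    ⟪fock p, ketbra i j (fock q)⟫ = if p = i ∧ j = q then 1 else 0 := by
  by_cases hjq : j = q <;> by_cases hpi : p = i <;>
    simp [ketbra, inner_fock_fock, norm_fock, hjq, hpi]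

lemma inner_fock_sum_ketbra_fock_eq_zero (N : ℕ) (f : ℕ → ℕ → ℂ) {p q : ℕ}
    (h : N < p ∨ N < q) :
    ⟪fock p, (∑ i ∈ Finset.range (N + 1), ∑ j ∈ Finset.range (N + 1),
      f i j • ketbra i j) (fock q)⟫ = 0 := by
  simp only [FunLike.coe_sum, Finset.sum_apply, FunLike.coe_smul,
    Pi.smul_apply, inner_sum, inner_smul_right, inner_fock_ketbra_fock]
  refine Finset.sum_eq_zero fun i hi => Finset.sum_eq_zero fun j hj => ?_
  rw [Finset.mem_range] at hi hj
  rw [if_neg (by omega), mul_zero]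

lemma riseR_nonneg (k n : ℕ) : 0 ≤ riseR k n :=
  Finset.prod_nonneg fun _ _ => by positivity

theorem tsum_nat_add_sub_eq_zero {G : Type*} [AddCommGroup G] [TopologicalSpace G]
    [IsTopologicalAddGroup G] [T2Space G] {c : ℕ → G} (hc : Summable c) {k : ℕ}
    (h : ∀ n < k, c n = 0) : ∑' n, (c (n + k) - c n) = 0 := by
  rw [Summable.tsum_sub ((summable_nat_add_iff k).2 hc) hc, ← hc.sum_add_tsum_nat_add k,
    Finset.sum_eq_zero fun n hn => h n (Finset.mem_range.1 hn), zero_add, sub_self]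

/-- The truncated subtraction `n - k` is harmless: for `n < k` the factor `fallR k n` vanishes. -/
def lindDiagPotential (k : ℕ) (α : ℝ) (ξ : H →L[ℂ] H) (n : ℕ) : ℂ :=
  ((fallR k n : ℝ) : ℂ) * ⟪fock n, ξ (fock n)⟫
    - (1 / 2 : ℂ) * (α : ℂ) ^ k * ((Real.sqrt (fallR k n) : ℝ) : ℂ) *
        (⟪fock (n - k), ξ (fock n)⟫ + ⟪fock n, ξ (fock (n - k))⟫)

lemma lindDiag_eq_sub (k : ℕ) (α : ℝ) (ξ : H →L[ℂ] H) (n : ℕ) :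
    lindDiag k α ξ n = lindDiagPotential k α ξ (n + k) - lindDiagPotential k α ξ n := by
  have hsqrt : ((Real.sqrt (riseR k n) : ℝ) : ℂ) * ((Real.sqrt (riseR k n) : ℝ) : ℂ)
      = ((riseR k n : ℝ) : ℂ) := by
    rw [← Complex.ofReal_mul, Real.mul_self_sqrt (riseR_nonneg k n)]
  simp only [lindDiag, lindDiagPotential, ldagFock, ldlFock, fallR_add_self,
    Nat.add_sub_cancel, map_sub, map_smul, inner_sub_left, inner_sub_right, inner_smul_left,
    inner_smul_right, map_mul, map_add, Complex.conj_ofReal, map_pow, Complex.ofReal_mul,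
    Complex.ofReal_add, Complex.ofReal_pow]
  have hpow : (α : ℂ) ^ (2 * k) = (α : ℂ) ^ k * (α : ℂ) ^ k := by ring
  linear_combination ⟪fock (n + k), ξ (fock (n + k))⟫ * hsqrt - ⟪fock n, ξ (fock n)⟫ * hpow

lemma lindDiagPotential_eq_zero_of_lt (k : ℕ) (α : ℝ) (ξ : H →L[ℂ] H) {n : ℕ} (h : n < k) :
    lindDiagPotential k α ξ n = 0 := by
  simp [lindDiagPotential, fallR_eq_zero_of_lt h]

lemma lindDiagPotential_eq_zero_of_gt (k : ℕ) (α : ℝ) {ξ : H →L[ℂ] H} {N : ℕ}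
    (hξ : ∀ p q, N < p ∨ N < q → ⟪fock p, ξ (fock q)⟫ = 0) {n : ℕ} (h : N < n) :
    lindDiagPotential k α ξ n = 0 := by
  simp [lindDiagPotential, hξ n n (.inl h), hξ (n - k) n (.inr h), hξ n (n - k) (.inl h)]

theorem tsum_mul_lindDiag_eq_zero {k : ℕ} (α : ℝ) {ξ : H →L[ℂ] H} {N : ℕ}
    (hξ : ∀ p q, N < p ∨ N < q → ⟪fock p, ξ (fock q)⟫ = 0) {w : ℕ → ℂ}
    (hw : Function.Periodic w k) : ∑' n, w n * lindDiag k α ξ n = 0 := by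
  set c : ℕ → ℂ := fun n => w n * lindDiagPotential k α ξ n
  have hc : Summable c := summable_of_ne_finset_zero (s := Finset.range (N + 1)) fun n hn => by
    rw [Finset.mem_range, not_lt] at hn
    simp [c, lindDiagPotential_eq_zero_of_gt k α hξ (Nat.lt_of_succ_le hn)]
  have hdiff : ∀ n, w n * lindDiag k α ξ n = c (n + k) - c n := fun n => by
    simp only [c, hw n, lindDiag_eq_sub, mul_sub]
  simp_rw [hdiff]
  exact tsum_nat_add_sub_eq_zero hc fun n hn => by
    simp [c, lindDiagPotential_eq_zero_of_lt k α ξ hn]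

lemma periodic_comp_two_pi_int_mul_div {g : ℝ → ℝ} (hg : Function.Periodic g (2 * Real.pi))
    (m : ℤ) (k : ℕ) : Function.Periodic (fun n : ℕ => g (2 * Real.pi * m * n / k)) k := by
  intro n
  rcases Nat.eq_zero_or_pos k with rfl | hk
  · simp
  have hk0 : (k : ℝ) ≠ 0 := by positivity
  have harg : 2 * Real.pi * m * ((n + k : ℕ) : ℝ) / k
      = 2 * Real.pi * m * n / k + m * (2 * Real.pi) := by
    push_cast
    field_simp
  simp only [harg, hg.int_mul m _]

theorem diagonal_invariants_of_lindbladian_general (k : ℕ) (α : ℝ)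
    (N : ℕ) (f : ℕ → ℕ → ℂ) (m : ℤ) (ξ : H →L[ℂ] H)
    (hξ : ξ = ∑ i ∈ Finset.range (N + 1), ∑ j ∈ Finset.range (N + 1), f i j • ketbra i j) :
    (∑' n : ℕ, ((Real.cos (2 * Real.pi * m * n / k) : ℝ) : ℂ) * lindDiag k α ξ n) = 0 ∧
    (∑' n : ℕ, ((Real.sin (2 * Real.pi * m * n / k) : ℝ) : ℂ) * lindDiag k α ξ n) = 0 := by
  have hsupp : ∀ p q, N < p ∨ N < q → ⟪fock p, ξ (fock q)⟫ = 0 := fun p q h => by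
    subst hξ
    exact inner_fock_sum_ketbra_fock_eq_zero N f h
  exact ⟨tsum_mul_lindDiag_eq_zero α hsupp
      ((periodic_comp_two_pi_int_mul_div Real.cos_periodic m k).comp Complex.ofReal),
    tsum_mul_lindDiag_eq_zero α hsupp
      ((periodic_comp_two_pi_int_mul_div Real.sin_periodic m k).comp Complex.ofReal)⟩

/-- For every finite-rank operator `ξ = ∑_{i,j ≤ N} f_{ij} |i⟩⟨j|` and every
integer `m`, the diagonal coefficients of `𝔏_L(ξ) = LξL† − ½L†Lξ − ½ξL†L` satisfy
`∑_n cos(2πmn/k) ⟨n|𝔏_L(ξ)|n⟩ = 0` and `∑_n sin(2πmn/k) ⟨n|𝔏_L(ξ)|n⟩ = 0`. -/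
theorem diagonal_invariants_of_lindbladian (k : ℕ) (hk : 1 ≤ k) (α : ℝ) (hα : 0 < α)
    (N : ℕ) (f : ℕ → ℕ → ℂ) (m : ℤ) (ξ : H →L[ℂ] H)
    (hξ : ξ = ∑ i ∈ Finset.range (N + 1), ∑ j ∈ Finset.range (N + 1), f i j • ketbra i j) :
    (∑' n : ℕ, ((Real.cos (2 * Real.pi * m * n / k) : ℝ) : ℂ) * lindDiag k α ξ n) = 0 ∧
    (∑' n : ℕ, ((Real.sin (2 * Real.pi * m * n / k) : ℝ) : ℂ) * lindDiag k α ξ n) = 0 :=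
  diagonal_invariants_of_lindbladian_general k α N f m ξ hξ
end
end
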